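/- Fix a penalty parameter λ > 0 and a subset size h with 1 ≤ h ≤ n. The sparse LTS estimator is defined for a sample Z = (X, y) with X ∈ ℝ^{n×p}, y ∈ ℝ^n as a minimizer over β ∈ ℝ^p of Σ_{i=1}^{h} (r²(β))_{i:n} + h λ Σ_{j=1}^{p} |β_j|, where r²(β) = ((y₁ − x₁'β)², …, (y_n − x_n'β)²)' and (r²(β))_{1:n} ≤ ⋯ ≤ (r²(β))_{n:n} are the order statistics of the squared residuals. Then for every sample Z, the replacement finite-sample breakdown point of the sparse LTS estimator equals (n − h + 1)/n. -/

import Mathlib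

open Finset

/-- The `i`-th order statistic of the vector `r`, i.e. the `i`-th entry after sorting
the entries of `r` in nondecreasing order. -/
noncomputable def orderStat {n : ℕ} (r : Fin n → ℝ) (i : Fin n) : ℝ :=
  r (Tuple.sort r i)

/-- The sum of the `h` smallest entries (order statistics) of the vector `r`. -/
noncomputable def trimmedSum {n : ℕ} (h : ℕ) (r : Fin n → ℝ) : ℝ :=
  ∑ i ∈ Finset.univ.filter (fun i : Fin n => (i : ℕ) < h), orderStat r i

/-- The L¹ norm of a coefficient vector `β ∈ ℝ^p`. -/
noncomputable def l1norm {p : ℕ} (β : Fin p → ℝ) : ℝ := ∑ j, |β j|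

/-- The Euclidean (L²) norm of a coefficient vector `β ∈ ℝ^p`. -/
noncomputable def euclNorm {p : ℕ} (β : Fin p → ℝ) : ℝ := Real.sqrt (∑ j, β j ^ 2)

/-- `Corrupt m X X' y y'` : the sample `(X', y')` is obtained from the sample `(X, y)` by
replacing (at most) `m` of the `n` observations `(xᵢ', yᵢ)` by arbitrary values. -/
def Corrupt {n p : ℕ} (m : ℕ) (X X' : Fin n → Fin p → ℝ) (y y' : Fin n → ℝ) : Prop :=
  ∃ s : Finset (Fin n), s.card ≤ m ∧ ∀ i ∉ s, (∀ j, X' i j = X i j) ∧ y' i = y i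

/-- The sparse LTS objective function
`Σ_{i=1}^{h} (r²(β))_{i:n} + h λ Σ_j |β_j|`, where `r²(β)` is the vector of squared
residuals `(yᵢ − xᵢ'β)²`. -/
noncomputable def QSparseLTS {n p : ℕ} (lam : ℝ) (h : ℕ)
    (X : Fin n → Fin p → ℝ) (y : Fin n → ℝ) (β : Fin p → ℝ) : ℝ :=
  trimmedSum h (fun i => (y i - ∑ j, X i j * β j) ^ 2) + (h : ℝ) * lam * l1norm β

/-- `BreaksDown est X y m` : the supremum of `‖est(Z̃)‖₂` over all samples `Z̃` obtained
from `Z = (X, y)` by replacing `m` observations by arbitrary values is infinite. -/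
def BreaksDown {n p : ℕ} (est : (Fin n → Fin p → ℝ) → (Fin n → ℝ) → Fin p → ℝ)
    (X : Fin n → Fin p → ℝ) (y : Fin n → ℝ) (m : ℕ) : Prop :=
  ∀ M : ℝ, ∃ X' y', Corrupt m X X' y y' ∧ M < euclNorm (est X' y')

/-- The replacement finite-sample breakdown point
`ε*(est; Z) = min{ m/n : sup_{Z̃} ‖est(Z̃)‖₂ = ∞ }`. -/
noncomputable def breakdownPoint {n p : ℕ}
    (est : (Fin n → Fin p → ℝ) → (Fin n → ℝ) → Fin p → ℝ)
    (X : Fin n → Fin p → ℝ) (y : Fin n → ℝ) : ℝ :=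
  ((sInf {m : ℕ | BreaksDown est X y m} : ℕ) : ℝ) / n
/-!
A minimizer of the sparse LTS objective can never do worse than `β = 0`, and with at most
`n - h` observations replaced some `h` clean observations remain, so the trimmed residual sum
at `0`, and hence the penalty `h λ ‖β̂‖₁` at the minimizer, is bounded by `∑ yᵢ²`. Conversely,
`n - h + 1` outliers placed at `(L e_{j₀}, L c)` meet every `h`-subset of the sample: any `β`
with `β_{j₀} ≤ c - 1` pays at least `L²` in trimmed residuals, while `β = c e_{j₀}` fits the
outliers exactly and costs a bound independent of `L`, so for large `L` the minimizer has
`β̂_{j₀} > c - 1`, with `c` arbitrary.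
-/

section OrderStatistics

variable {n h : ℕ}

lemma Fin.val_le_of_strictMono {m : ℕ} {f : Fin m → Fin n} (hf : StrictMono f) (k : Fin m) :
    (k : ℕ) ≤ f k := by
  simpa using card_le_card_of_injOn f (s := Iio k) (t := Iio (f k))
    (fun a ha => by simpa using hf (by simpa using ha)) hf.injective.injOn

lemma filter_val_lt_eq_map (hhn : h ≤ n) :
    univ.filter (fun i : Fin n => (i : ℕ) < h) = univ.map (Fin.castLEOrderEmb hhn).toEmbedding := by
  ext i
  simp only [mem_filter, mem_univ, true_and, mem_map, RelEmbedding.coe_toEmbedding]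
  exact ⟨fun hi => ⟨⟨i, hi⟩, rfl⟩, fun ⟨k, hk⟩ => hk ▸ k.2⟩

lemma card_filter_val_lt (hhn : h ≤ n) : #(univ.filter fun i : Fin n => (i : ℕ) < h) = h := by
  rw [filter_val_lt_eq_map hhn, card_map, card_univ, Fintype.card_fin]

lemma sum_filter_val_lt_le_sum_of_monotone {M : Type*} [AddCommMonoid M] [PartialOrder M]
    [IsOrderedAddMonoid M] (hhn : h ≤ n) {g : Fin n → M} (hg : Monotone g)
    {t : Finset (Fin n)} (ht : #t = h) :
    ∑ i ∈ univ.filter (fun i : Fin n => (i : ℕ) < h), g i ≤ ∑ i ∈ t, g i := by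
  rw [filter_val_lt_eq_map hhn, ← map_orderEmbOfFin_univ t ht, sum_map, sum_map]
  exact sum_le_sum fun k _ => hg (Fin.val_le_of_strictMono (t.orderEmbOfFin ht).strictMono k)

noncomputable def trimmedIndices (h : ℕ) (r : Fin n → ℝ) : Finset (Fin n) :=
  (univ.filter fun i : Fin n => (i : ℕ) < h).map (Tuple.sort r).toEmbedding

lemma card_trimmedIndices (hhn : h ≤ n) (r : Fin n → ℝ) : #(trimmedIndices h r) = h := by
  rw [trimmedIndices, card_map, card_filter_val_lt hhn]

lemma trimmedSum_eq_sum_trimmedIndices (r : Fin n → ℝ) :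
    trimmedSum h r = ∑ i ∈ trimmedIndices h r, r i := by
  rw [trimmedIndices, sum_map]
  rfl

lemma trimmedSum_le_sum (hhn : h ≤ n) (r : Fin n → ℝ) {s : Finset (Fin n)} (hs : #s = h) :
    trimmedSum h r ≤ ∑ i ∈ s, r i :=
  calc trimmedSum h r ≤ ∑ k ∈ s.map (Tuple.sort r).symm.toEmbedding, r (Tuple.sort r k) :=
        sum_filter_val_lt_le_sum_of_monotone hhn (Tuple.monotone_sort r) (by rw [card_map, hs])
    _ = ∑ i ∈ s, r i := by simp [sum_map]

lemma trimmedSum_le_sum_univ {r : Fin n → ℝ} (hr : ∀ i, 0 ≤ r i) : trimmedSum h r ≤ ∑ i, r i := by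
  rw [trimmedSum_eq_sum_trimmedIndices]
  exact sum_le_sum_of_subset_of_nonneg (subset_univ _) fun i _ _ => hr i

lemma le_trimmedSum (hhn : h ≤ n) {r : Fin n → ℝ} (hr : ∀ i, 0 ≤ r i) {s : Finset (Fin n)}
    (hs : n < #s + h) {v : ℝ} (hv : ∀ i ∈ s, v ≤ r i) : v ≤ trimmedSum h r := by
  obtain ⟨i, hi⟩ := inter_nonempty_of_card_lt_card_add_card (subset_univ s)
    (subset_univ (trimmedIndices h r))
    (by rwa [card_trimmedIndices hhn, card_univ, Fintype.card_fin])
  rw [mem_inter] at hi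
  rw [trimmedSum_eq_sum_trimmedIndices]
  exact (hv i hi.1).trans (single_le_sum (fun j _ => hr j) hi.2)

end OrderStatistics

lemma euclNorm_le_l1norm {p : ℕ} (β : Fin p → ℝ) : euclNorm β ≤ l1norm β := by
  have hsq : ∑ j, β j ^ 2 ≤ (∑ j, |β j|) ^ 2 := by
    simpa [sq_abs] using sum_sq_le_sq_sum_of_nonneg (s := univ) fun j _ => abs_nonneg (β j)
  calc euclNorm β ≤ √((l1norm β) ^ 2) := Real.sqrt_le_sqrt hsq
    _ = l1norm β := Real.sqrt_sq (sum_nonneg fun j _ => abs_nonneg _)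

lemma abs_le_euclNorm {p : ℕ} (β : Fin p → ℝ) (j : Fin p) : |β j| ≤ euclNorm β := by
  rw [← Real.sqrt_sq_eq_abs]
  exact Real.sqrt_le_sqrt (single_le_sum (fun i _ => sq_nonneg (β i)) (mem_univ j))

section SparseLTS

variable {n p h m : ℕ} {lam : ℝ} {est : (Fin n → Fin p → ℝ) → (Fin n → ℝ) → Fin p → ℝ}
  {X X' : Fin n → Fin p → ℝ} {y y' : Fin n → ℝ}

def IsSparseLTS (lam : ℝ) (h : ℕ) (est : (Fin n → Fin p → ℝ) → (Fin n → ℝ) → Fin p → ℝ) :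
    Prop :=
  ∀ X y β, QSparseLTS lam h X y (est X y) ≤ QSparseLTS lam h X y β

lemma penalty_le_QSparseLTS (β : Fin p → ℝ) :
    h * lam * l1norm β ≤ QSparseLTS lam h X y β :=
  le_add_of_nonneg_left (sum_nonneg fun _ _ => sq_nonneg _)

lemma QSparseLTS_zero_le_of_corrupt (hm : m + h ≤ n) (hc : Corrupt m X X' y y') :
    QSparseLTS lam h X' y' 0 ≤ ∑ i, y i ^ 2 := by
  obtain ⟨s, hs, hclean⟩ := hc
  obtain ⟨G, hGs, hG⟩ := exists_subset_card_eq (s := sᶜ) (n := h)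
    (by rw [card_compl, Fintype.card_fin]; omega)
  simp only [QSparseLTS, Pi.zero_apply, mul_zero, sum_const_zero, sub_zero, l1norm, abs_zero,
    add_zero]
  calc trimmedSum h (fun i => y' i ^ 2) ≤ ∑ i ∈ G, y' i ^ 2 := trimmedSum_le_sum (by omega) _ hG
    _ = ∑ i ∈ G, y i ^ 2 := sum_congr rfl fun i hi => by rw [(hclean i (mem_compl.1 (hGs hi))).2]
    _ ≤ ∑ i, y i ^ 2 := sum_le_sum_of_subset_of_nonneg (subset_univ _) fun i _ _ => sq_nonneg _

lemma not_breaksDown_of_add_le (hh : 0 < h) (hlam : 0 < lam) (hest : IsSparseLTS lam h est)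
    (hm : m + h ≤ n) : ¬ BreaksDown est X y m := by
  intro hBD
  obtain ⟨X', y', hc, hM⟩ := hBD ((∑ i, y i ^ 2) / (h * lam))
  refine hM.not_ge ((euclNorm_le_l1norm _).trans ?_)
  rw [le_div_iff₀ (by positivity), mul_comm]
  calc h * lam * l1norm (est X' y') ≤ QSparseLTS lam h X' y' (est X' y') :=
        penalty_le_QSparseLTS _
    _ ≤ QSparseLTS lam h X' y' 0 := hest X' y' 0
    _ ≤ ∑ i, y i ^ 2 := QSparseLTS_zero_le_of_corrupt hm hc

lemma corrupt_piecewise {s : Finset (Fin n)} (hs : #s ≤ m) (x₀ : Fin p → ℝ) (y₀ : ℝ) :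
    Corrupt m X (s.piecewise (fun _ => x₀) X) y (s.piecewise (fun _ => y₀) y) :=
  ⟨s, hs, fun i hi => ⟨fun j => by rw [piecewise_eq_of_notMem _ _ _ hi],
    piecewise_eq_of_notMem _ _ _ hi⟩⟩

lemma QSparseLTS_single_le (s : Finset (Fin n)) (j₀ : Fin p) (L : ℝ) {c : ℝ} (hc : 0 ≤ c) :
    QSparseLTS lam h (s.piecewise (fun _ => Pi.single j₀ L) X) (s.piecewise (fun _ => L * c) y)
      (Pi.single j₀ c) ≤ ∑ i, (y i - c * X i j₀) ^ 2 + h * lam * c := by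
  have hl1 : l1norm (Pi.single j₀ c : Fin p → ℝ) = c := by
    simp [l1norm, Pi.single_apply, apply_ite, abs_of_nonneg hc]
  rw [QSparseLTS, hl1, add_le_add_iff_right]
  refine (trimmedSum_le_sum_univ fun _ => sq_nonneg _).trans (sum_le_sum fun i _ => ?_)
  by_cases hi : i ∈ s
  · simp [hi, Pi.single_apply, sq_nonneg]
  · simp [hi, Pi.single_apply, mul_comm]

lemma le_QSparseLTS_of_outliers (hlam : 0 ≤ lam) (hhn : h ≤ n) {s : Finset (Fin n)}
    (hs : n < #s + h) (j₀ : Fin p) (L c : ℝ) {β : Fin p → ℝ} (hβ : β j₀ + 1 ≤ c) :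
    L ^ 2 ≤ QSparseLTS lam h (s.piecewise (fun _ => Pi.single j₀ L) X)
      (s.piecewise (fun _ => L * c) y) β := by
  refine le_add_of_le_of_nonneg (le_trimmedSum hhn (fun _ => sq_nonneg _) hs fun i hi => ?_)
    (mul_nonneg (by positivity) (sum_nonneg fun j _ => abs_nonneg (β j)))
  simp only [hi, piecewise_eq_of_mem, Pi.single_apply, ite_mul, zero_mul, sum_ite_eq',
    mem_univ, if_true]
  calc L ^ 2 = L ^ 2 * 1 ^ 2 := by ring
    _ ≤ L ^ 2 * (c - β j₀) ^ 2 := by gcongr; linarith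
    _ = (L * c - L * β j₀) ^ 2 := by ring

lemma breaksDown_of_lt_add (hp : 0 < p) (hlam : 0 ≤ lam) (hest : IsSparseLTS lam h est)
    (hhn : h ≤ n) (hmn : m ≤ n) (hm : n < m + h) : BreaksDown est X y m := by
  intro M
  set j₀ : Fin p := ⟨0, hp⟩
  set c := |M| + 1
  set B := ∑ i, (y i - c * X i j₀) ^ 2
  set L := √(B + h * lam * c + 1)
  have hL : L ^ 2 = B + h * lam * c + 1 := Real.sq_sqrt (by positivity)
  obtain ⟨s, -, hs⟩ := exists_subset_card_eq (s := (univ : Finset (Fin n))) (n := m)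
    (by rwa [card_univ, Fintype.card_fin])
  set X' := s.piecewise (fun _ => Pi.single j₀ L) X
  set y' := s.piecewise (fun _ => L * c) y
  refine ⟨X', y', corrupt_piecewise hs.le (Pi.single j₀ L) (L * c), ?_⟩
  by_contra! hle
  have hβ : est X' y' j₀ + 1 ≤ c := by
    linarith [le_abs_self (est X' y' j₀), abs_le_euclNorm (est X' y') j₀, le_abs_self M]
  have := calc B + h * lam * c + 1 = L ^ 2 := hL.symm
    _ ≤ QSparseLTS lam h X' y' (est X' y') :=
        le_QSparseLTS_of_outliers hlam hhn (by omega) j₀ L c hβ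
    _ ≤ QSparseLTS lam h X' y' (Pi.single j₀ c) := hest X' y' _
    _ ≤ B + h * lam * c := QSparseLTS_single_le s j₀ L (by positivity)
  linarith

end SparseLTS

/-- The sparse LTS estimator, with penalty parameter `λ > 0` and subset size `1 ≤ h ≤ n`,
i.e. any estimator that, for every sample, minimizes the sparse LTS objective, has
replacement finite-sample breakdown point `(n − h + 1)/n` at every sample `Z = (X, y)`. -/
theorem breakdown_point_sparseLTS
    {n p h : ℕ} (hp : 1 ≤ p) (hh1 : 1 ≤ h) (hhn : h ≤ n)
    (lam : ℝ) (hlam : 0 < lam)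
    (est : (Fin n → Fin p → ℝ) → (Fin n → ℝ) → Fin p → ℝ)
    (hest : ∀ (X : Fin n → Fin p → ℝ) (y : Fin n → ℝ) (β : Fin p → ℝ),
      QSparseLTS lam h X y (est X y) ≤ QSparseLTS lam h X y β)
    (X : Fin n → Fin p → ℝ) (y : Fin n → ℝ) :
    breakdownPoint est X y = ((n : ℝ) - h + 1) / n := by
  have hbreaks : BreaksDown est X y (n - h + 1) :=
    breaksDown_of_lt_add hp hlam.le hest hhn (by omega) (by omega)
  have hsInf : sInf {m | BreaksDown est X y m} = n - h + 1 :=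
    le_antisymm (Nat.sInf_le hbreaks) <| le_csInf ⟨_, hbreaks⟩ fun m hm =>
      not_lt.1 fun hlt => not_breaksDown_of_add_le hh1 hlam hest (by omega) hm
  rw [breakdownPoint, hsInf, Nat.cast_add, Nat.cast_sub hhn, Nat.cast_one]
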